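/- Let f : ℝ^N → ℝ be differentiable, μ-strongly convex with gradient L-Lipschitz continuous (0 < μ ≤ L), let 0 < γ < 1, let x, x' ∈ ℝ^N with x ≠ x', set s = x − x', y = ∇f(x) − ∇f(x'), τ = ⟨s, y⟩/‖y‖², u = (s − γ τ y)/√((1 − γ)⟨s, y⟩), and H = γ τ Id + u u^T (the 0SR1 inverse-Hessian approximation). Then a·Id ⪯ H ⪯ b·Id in the Loewner partial order, where a = γ L^{-1} > 0 and b = ((1 + γ) μ^{-1} − 2 γ L^{-1})/(1 − γ). -/

import Mathlib

/-!
Strong convexity gives `μ ‖s‖² ≤ ⟨s, y⟩`, and cocoercivity of the gradient of a convex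
function with `L`-Lipschitz gradient (Baillon–Haddad) gives `‖y‖² ≤ L ⟨s, y⟩`, i.e. `τ ≥ 1/L`;
cocoercivity follows by bounding `f (w - L⁻¹ (∇f w - ∇f z))` from below by convexity at `z` and
from above by the descent lemma at `w`. Since `u uᵀ ⪰ 0`, the lower bound is `γ τ ≥ γ / L`.
The largest eigenvalue of `H` is `γ τ + ‖u‖² = (‖s‖² / ⟨s, y⟩ - γ τ) / (1 - γ)`, which is at most
`(1/μ - γ/L) / (1 - γ) ≤ b`.
-/

open Matrix

noncomputable section

/-- Euclidean norm `‖x‖ = √⟨x,x⟩` on `ℝ^N` (inner product `⟨x,y⟩ = ∑ i, x i * y i`). -/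
def euNorm {N : ℕ} (x : Fin N → ℝ) : ℝ := Real.sqrt (x ⬝ᵥ x)

/-- The continuous linear functional `v ↦ ⟨w, v⟩`; `HasFDerivAt f (dotCLM (f' x)) x`
expresses that `f` is differentiable at `x` with gradient `f' x`. -/
def dotCLM {N : ℕ} (w : Fin N → ℝ) : (Fin N → ℝ) →L[ℝ] ℝ :=
  LinearMap.toContinuousLinearMap
    { toFun := fun v => w ⬝ᵥ v
      map_add' := fun a b => by simp [dotProduct_add]
      map_smul' := fun c a => by simp [dotProduct_smul] }

open Set

section DotProduct

variable {n : Type*} [Fintype n]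

theorem dotProduct_self_nonneg (v : n → ℝ) : 0 ≤ v ⬝ᵥ v :=
  Finset.sum_nonneg fun i _ => mul_self_nonneg (v i)

theorem dotProduct_self_pos {v : n → ℝ} (hv : v ≠ 0) : 0 < v ⬝ᵥ v :=
  (dotProduct_self_nonneg v).lt_of_ne (Ne.symm (dotProduct_self_eq_zero.not.mpr hv))

theorem dotProduct_sq_le_dotProduct_self_mul_dotProduct_self (u v : n → ℝ) :
    (u ⬝ᵥ v) ^ 2 ≤ (u ⬝ᵥ u) * (v ⬝ᵥ v) := by
  simpa only [dotProduct, sq] using Finset.sum_mul_sq_le_sq_mul_sq Finset.univ u v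

theorem sub_smul_dotProduct_sub_smul (s y : n → ℝ) (c : ℝ) :
    (s - c • y) ⬝ᵥ (s - c • y) = s ⬝ᵥ s - 2 * c * (s ⬝ᵥ y) + c ^ 2 * (y ⬝ᵥ y) := by
  simp only [sub_dotProduct, dotProduct_sub, smul_dotProduct, dotProduct_smul, smul_eq_mul,
    dotProduct_comm y s]
  ring

theorem convexOn_dotProduct_self : ConvexOn ℝ univ fun z : n → ℝ => z ⬝ᵥ z := by
  refine ⟨convex_univ, fun x _ y _ a b ha hb hab => ?_⟩
  obtain rfl : b = 1 - a := by linarith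
  have hxy := dotProduct_self_nonneg (x - y)
  simp only [sub_dotProduct, dotProduct_sub, add_dotProduct, dotProduct_add, smul_dotProduct,
    dotProduct_smul, smul_eq_mul, dotProduct_comm y x] at hxy ⊢
  nlinarith [mul_nonneg ha hb]

end DotProduct

section EuclideanNorm

variable {N : ℕ}

theorem euNorm_mul_self (v : Fin N → ℝ) : euNorm v * euNorm v = v ⬝ᵥ v :=
  Real.mul_self_sqrt (dotProduct_self_nonneg v)

theorem euNorm_smul (c : ℝ) (v : Fin N → ℝ) : euNorm (c • v) = |c| * euNorm v := by
  rw [euNorm, euNorm, smul_dotProduct, dotProduct_smul, smul_eq_mul, smul_eq_mul, ← mul_assoc,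
    Real.sqrt_mul (mul_self_nonneg c), Real.sqrt_mul_self_eq_abs]

theorem dotProduct_le_euNorm_mul_euNorm (u v : Fin N → ℝ) : u ⬝ᵥ v ≤ euNorm u * euNorm v := by
  rw [euNorm, euNorm, ← Real.sqrt_mul (dotProduct_self_nonneg u)]
  exact (le_abs_self _).trans
    (Real.abs_le_sqrt (dotProduct_sq_le_dotProduct_self_mul_dotProduct_self u v))

end EuclideanNorm

section Matrix

variable {n : Type*} [Fintype n] [DecidableEq n]

theorem posSemidef_smul_one_add_vecMulVec_self {c : ℝ} (hc : 0 ≤ c) (u : n → ℝ) :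
    (c • (1 : Matrix n n ℝ) + vecMulVec u u).PosSemidef :=
  (PosSemidef.one.smul hc).add (posSemidef_vecMulVec_self_star u)

theorem posSemidef_smul_one_sub_vecMulVec_self {c : ℝ} {u : n → ℝ} (hu : u ⬝ᵥ u ≤ c) :
    (c • (1 : Matrix n n ℝ) - vecMulVec u u).PosSemidef := by
  refine PosSemidef.of_dotProduct_mulVec_nonneg ?_ fun v => ?_
  · exact (isHermitian_one.smul (IsSelfAdjoint.all c)).sub
      (posSemidef_vecMulVec_self_star u).isHermitian
  · have hcs := dotProduct_sq_le_dotProduct_self_mul_dotProduct_self u v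
    have hv := dotProduct_self_nonneg v
    simp only [star_trivial, sub_mulVec, smul_mulVec, one_mulVec, vecMulVec_mulVec,
      dotProduct_sub, dotProduct_smul, smul_eq_mul, op_smul_eq_smul, dotProduct_comm v u]
    nlinarith

end Matrix

section Gradient

variable {N : ℕ} {f : (Fin N → ℝ) → ℝ} {f' : (Fin N → ℝ) → Fin N → ℝ}

@[simp]
theorem dotCLM_apply (w v : Fin N → ℝ) : dotCLM w v = w ⬝ᵥ v := rfl

theorem dotCLM_sub (v w : Fin N → ℝ) : dotCLM (v - w) = dotCLM v - dotCLM w := by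
  ext
  simp [sub_dotProduct]

theorem hasFDerivAt_half_mul_dotProduct_self (μ : ℝ) (z : Fin N → ℝ) :
    HasFDerivAt (fun w : Fin N → ℝ => μ / 2 * (w ⬝ᵥ w)) (dotCLM (μ • z)) z := by
  let π (i : Fin N) : (Fin N → ℝ) →L[ℝ] ℝ := ContinuousLinearMap.proj i
  have hsq : HasFDerivAt (fun w : Fin N → ℝ => ∑ i, w i * w i)
      (∑ i, (z i • π i + z i • π i)) z :=
    HasFDerivAt.fun_sum fun i _ => (hasFDerivAt_apply i z).mul (hasFDerivAt_apply i z)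
  have hderiv : (μ / 2) • ∑ i, (z i • π i + z i • π i) = dotCLM (μ • z) := by
    ext v
    simp only [_root_.smul_apply, _root_.sum_apply, _root_.add_apply, smul_eq_mul, dotCLM_apply,
      dotProduct, Finset.mul_sum]
    refine Finset.sum_congr rfl fun i _ => ?_
    simp only [π, ContinuousLinearMap.proj_apply, Pi.smul_apply, smul_eq_mul]
    ring
  exact hderiv ▸ hsq.const_mul (μ / 2)

theorem hasDerivAt_comp_add_smul (hdiff : ∀ z, HasFDerivAt f (dotCLM (f' z)) z)
    (z d : Fin N → ℝ) (t : ℝ) :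
    HasDerivAt (fun t : ℝ => f (z + t • d)) (f' (z + t • d) ⬝ᵥ d) t := by
  have hline : HasDerivAt (fun t : ℝ => z + t • d) d t := by
    simpa using ((hasDerivAt_id t).smul_const d).const_add z
  exact (hdiff (z + t • d)).comp_hasDerivAt t hline

theorem ConvexOn.add_gradient_dotProduct_le (hdiff : ∀ z, HasFDerivAt f (dotCLM (f' z)) z)
    (hf : ConvexOn ℝ univ f) (z w : Fin N → ℝ) : f z + f' z ⬝ᵥ (w - z) ≤ f w := by
  have hline : ConvexOn ℝ univ fun t : ℝ => f (z + t • (w - z)) := by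
    have h := hf.comp_affineMap (AffineMap.lineMap z w : ℝ →ᵃ[ℝ] (Fin N → ℝ))
    simpa [Function.comp_def, AffineMap.lineMap_apply, add_comm] using h
  have hslope := hline.le_slope_of_hasDerivAt (mem_univ 0) (mem_univ 1) one_pos
    (hasDerivAt_comp_add_smul hdiff z (w - z) 0)
  simp only [slope_def_field, zero_smul, add_zero, one_smul, add_sub_cancel, sub_zero,
    div_one] at hslope
  linarith

theorem ConvexOn.dotProduct_gradient_sub_nonneg
    (hdiff : ∀ z, HasFDerivAt f (dotCLM (f' z)) z) (hf : ConvexOn ℝ univ f) (z w : Fin N → ℝ) :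
    0 ≤ (w - z) ⬝ᵥ (f' w - f' z) := by
  have hzw := hf.add_gradient_dotProduct_le hdiff z w
  have hwz := hf.add_gradient_dotProduct_le hdiff w z
  rw [← neg_sub w z, dotProduct_neg] at hwz
  rw [dotProduct_comm, sub_dotProduct]
  linarith

end Gradient

section StrongConvexity

variable {N : ℕ} {f : (Fin N → ℝ) → ℝ} {f' : (Fin N → ℝ) → Fin N → ℝ} {μ : ℝ}

theorem convexOn_of_convexOn_sub_half_mul_dotProduct_self (hμ : 0 ≤ μ)
    (hsc : ConvexOn ℝ univ fun z => f z - μ / 2 * (z ⬝ᵥ z)) : ConvexOn ℝ univ f := by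
  refine (hsc.add (convexOn_dotProduct_self.smul (by positivity : 0 ≤ μ / 2))).congr
    fun z _ => ?_
  simp only [Pi.add_apply, smul_eq_mul, sub_add_cancel]

theorem mul_dotProduct_self_le_dotProduct_gradient_sub
    (hdiff : ∀ z, HasFDerivAt f (dotCLM (f' z)) z)
    (hsc : ConvexOn ℝ univ fun z => f z - μ / 2 * (z ⬝ᵥ z)) (z w : Fin N → ℝ) :
    μ * ((w - z) ⬝ᵥ (w - z)) ≤ (w - z) ⬝ᵥ (f' w - f' z) := by
  have hdiff_sub : ∀ z, HasFDerivAt (fun z => f z - μ / 2 * (z ⬝ᵥ z)) (dotCLM (f' z - μ • z)) z :=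
    fun z => dotCLM_sub (f' z) (μ • z) ▸
      (hdiff z).sub (hasFDerivAt_half_mul_dotProduct_self μ z)
  have hmono := hsc.dotProduct_gradient_sub_nonneg hdiff_sub z w
  rw [show f' w - μ • w - (f' z - μ • z) = (f' w - f' z) - μ • (w - z) by module,
    dotProduct_sub, dotProduct_smul, smul_eq_mul] at hmono
  linarith

end StrongConvexity

section LipschitzGradient

variable {N : ℕ} {f : (Fin N → ℝ) → ℝ} {f' : (Fin N → ℝ) → Fin N → ℝ} {L : ℝ}

theorem dotProduct_gradient_sub_le (hlip : ∀ z w, euNorm (f' z - f' w) ≤ L * euNorm (z - w))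
    (z w v : Fin N → ℝ) : (f' w - f' z) ⬝ᵥ v ≤ L * euNorm (w - z) * euNorm v :=
  (dotProduct_le_euNorm_mul_euNorm _ _).trans
    (mul_le_mul_of_nonneg_right (hlip w z) (Real.sqrt_nonneg _))

theorem le_add_gradient_dotProduct_add (hdiff : ∀ z, HasFDerivAt f (dotCLM (f' z)) z)
    (hlip : ∀ z w, euNorm (f' z - f' w) ≤ L * euNorm (z - w)) (z d : Fin N → ℝ) :
    f (z + d) ≤ f z + f' z ⬝ᵥ d + L / 2 * (d ⬝ᵥ d) := by
  set ψ : ℝ → ℝ := fun t => f (z + t • d) - t * (f' z ⬝ᵥ d) - L / 2 * t ^ 2 * (d ⬝ᵥ d)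
  set ψ' : ℝ → ℝ := fun t => (f' (z + t • d) - f' z) ⬝ᵥ d - L * t * (d ⬝ᵥ d)
  have hψ : ∀ t, HasDerivAt ψ (ψ' t) t := by
    intro t
    refine (((hasDerivAt_comp_add_smul hdiff z d t).sub
      ((hasDerivAt_id t).mul_const (f' z ⬝ᵥ d))).sub
      (((hasDerivAt_pow 2 t).const_mul (L / 2)).mul_const (d ⬝ᵥ d))).congr_deriv ?_
    simp only [ψ', sub_dotProduct]
    ring
  have hψ'_nonpos : ∀ t ∈ interior (Icc (0 : ℝ) 1), ψ' t ≤ 0 := by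
    intro t ht
    rw [interior_Icc] at ht
    have hle := dotProduct_gradient_sub_le hlip z (z + t • d) d
    rw [add_sub_cancel_left, euNorm_smul, abs_of_pos ht.1, mul_assoc, mul_assoc,
      euNorm_mul_self] at hle
    linarith
  have hanti := antitoneOn_of_hasDerivWithinAt_nonpos (convex_Icc 0 1)
    (continuous_iff_continuousAt.2 fun t => (hψ t).continuousAt).continuousOn
    (fun t _ => (hψ t).hasDerivWithinAt) hψ'_nonpos
  have h10 := hanti (left_mem_Icc.2 zero_le_one) (right_mem_Icc.2 zero_le_one) zero_le_one
  simp only [ψ, one_smul, zero_smul, add_zero] at h10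
  linarith

theorem ConvexOn.add_gradient_dotProduct_add_le (hdiff : ∀ z, HasFDerivAt f (dotCLM (f' z)) z)
    (hf : ConvexOn ℝ univ f) (hlip : ∀ z w, euNorm (f' z - f' w) ≤ L * euNorm (z - w))
    (hL : 0 < L) (z w : Fin N → ℝ) :
    f z + f' z ⬝ᵥ (w - z) + (2 * L)⁻¹ * ((f' w - f' z) ⬝ᵥ (f' w - f' z)) ≤ f w := by
  set r := f' w - f' z
  have hfirst := hf.add_gradient_dotProduct_le hdiff z (w - L⁻¹ • r)
  have hdescent := le_add_gradient_dotProduct_add hdiff hlip w (-(L⁻¹ • r))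
  rw [← sub_eq_add_neg] at hdescent
  rw [show w - L⁻¹ • r - z = (w - z) - L⁻¹ • r by abel, dotProduct_sub, dotProduct_smul,
    smul_eq_mul] at hfirst
  simp only [dotProduct_neg, neg_dotProduct, dotProduct_smul, smul_dotProduct,
    smul_eq_mul] at hdescent
  have hr : L⁻¹ * (f' w ⬝ᵥ r) - L⁻¹ * (f' z ⬝ᵥ r) = L⁻¹ * (r ⬝ᵥ r) := by
    rw [← mul_sub, ← sub_dotProduct]
  have hhalf : L⁻¹ * (r ⬝ᵥ r) = 2 * ((2 * L)⁻¹ * (r ⬝ᵥ r)) := by field_simp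
  have hquad : L / 2 * (L⁻¹ * (L⁻¹ * (r ⬝ᵥ r))) = (2 * L)⁻¹ * (r ⬝ᵥ r) := by field_simp
  linarith

theorem ConvexOn.dotProduct_gradient_sub_self_le (hdiff : ∀ z, HasFDerivAt f (dotCLM (f' z)) z)
    (hf : ConvexOn ℝ univ f) (hlip : ∀ z w, euNorm (f' z - f' w) ≤ L * euNorm (z - w))
    (hL : 0 < L) (z w : Fin N → ℝ) :
    (f' w - f' z) ⬝ᵥ (f' w - f' z) ≤ L * ((w - z) ⬝ᵥ (f' w - f' z)) := by
  have hzw := hf.add_gradient_dotProduct_add_le hdiff hlip hL z w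
  have hwz := hf.add_gradient_dotProduct_add_le hdiff hlip hL w z
  rw [← neg_sub (f' w), neg_dotProduct, dotProduct_neg, neg_neg, ← neg_sub w,
    dotProduct_neg] at hwz
  rw [← inv_mul_le_iff₀ hL, dotProduct_comm (w - z), sub_dotProduct (f' w) (f' z) (w - z)]
  have htwo : 2 * ((2 * L)⁻¹ * ((f' w - f' z) ⬝ᵥ (f' w - f' z)))
      = L⁻¹ * ((f' w - f' z) ⬝ᵥ (f' w - f' z)) := by
    field_simp
  linarith

end LipschitzGradient

section ZeroSR1

variable {n : Type*} [Fintype n]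

def zeroSR1Vec (γ τ : ℝ) (s y : n → ℝ) : n → ℝ :=
  (Real.sqrt ((1 - γ) * (s ⬝ᵥ y)))⁻¹ • (s - (γ * τ) • y)

theorem mul_add_zeroSR1Vec_dotProduct_self {γ τ : ℝ} {s y : n → ℝ} (hγ1 : γ < 1)
    (hsy : 0 < s ⬝ᵥ y) (hτ : τ * (y ⬝ᵥ y) = s ⬝ᵥ y) :
    γ * τ + zeroSR1Vec γ τ s y ⬝ᵥ zeroSR1Vec γ τ s y = (s ⬝ᵥ s / (s ⬝ᵥ y) - γ * τ) / (1 - γ) := by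
  have hγ1' : 0 < 1 - γ := sub_pos.2 hγ1
  have hpos : 0 < (1 - γ) * (s ⬝ᵥ y) := mul_pos hγ1' hsy
  have hsqrt := Real.mul_self_sqrt hpos.le
  rw [zeroSR1Vec, smul_dotProduct, dotProduct_smul, sub_smul_dotProduct_sub_smul, smul_eq_mul,
    smul_eq_mul, ← mul_assoc, ← mul_inv, hsqrt,
    show (γ * τ) ^ 2 * (y ⬝ᵥ y) = γ ^ 2 * τ * (s ⬝ᵥ y) by rw [← hτ]; ring]
  field_simp [hγ1'.ne']
  ring

theorem mul_add_zeroSR1Vec_dotProduct_self_le {μ L γ τ : ℝ} {s y : n → ℝ} (hμ : 0 < μ)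
    (hμL : μ ≤ L) (hγ0 : 0 < γ) (hγ1 : γ < 1) (hsy : 0 < s ⬝ᵥ y)
    (hmono : μ * (s ⬝ᵥ s) ≤ s ⬝ᵥ y) (hτy : τ * (y ⬝ᵥ y) = s ⬝ᵥ y) (hτL : L⁻¹ ≤ τ) :
    γ * τ + zeroSR1Vec γ τ s y ⬝ᵥ zeroSR1Vec γ τ s y ≤ ((1 + γ) / μ - 2 * γ / L) / (1 - γ) := by
  rw [mul_add_zeroSR1Vec_dotProduct_self hγ1 hsy hτy]
  refine div_le_div_of_nonneg_right ?_ (sub_pos.2 hγ1).le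
  have hss : s ⬝ᵥ s / (s ⬝ᵥ y) ≤ 1 / μ := by
    rw [div_le_div_iff₀ hsy hμ]
    linarith
  have hγτ : γ / L ≤ γ * τ := mul_le_mul_of_nonneg_left hτL hγ0.le
  have hγμ : γ / L ≤ γ / μ := div_le_div_of_nonneg_left hγ0.le hμ hμL
  rw [add_div, mul_div_assoc]
  linarith

end ZeroSR1

/-- Eigenvalue bounds for the 0SR1 inverse-Hessian approximation
`H = γτ·Id + u uᵀ` with `τ = ⟨s,y⟩/‖y‖²`, `u = (s - γτ y)/√((1-γ)⟨s,y⟩)`: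
`a·Id ⪯ H ⪯ b·Id` with `a = γ/L` and `b = ((1+γ)/μ - 2γ/L)/(1-γ)`. -/
theorem stmt_10 {N : ℕ} (μ L γ : ℝ) (hμ : 0 < μ) (hμL : μ ≤ L)
    (hγ0 : 0 < γ) (hγ1 : γ < 1)
    (f : (Fin N → ℝ) → ℝ) (f' : (Fin N → ℝ) → Fin N → ℝ)
    (hdiff : ∀ z : Fin N → ℝ, HasFDerivAt f (dotCLM (f' z)) z)
    (hsc : ConvexOn ℝ Set.univ fun z => f z - μ / 2 * (z ⬝ᵥ z))
    (hlip : ∀ z w : Fin N → ℝ, euNorm (f' z - f' w) ≤ L * euNorm (z - w))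
    (x x' : Fin N → ℝ) (hne : x ≠ x')
    (s y : Fin N → ℝ) (hs : s = x - x') (hy : y = f' x - f' x')
    (τ : ℝ) (hτ : τ = (s ⬝ᵥ y) / (y ⬝ᵥ y))
    (u : Fin N → ℝ) (hu : u = (Real.sqrt ((1 - γ) * (s ⬝ᵥ y)))⁻¹ • (s - (γ * τ) • y))
    (H : Matrix (Fin N) (Fin N) ℝ)
    (hH : H = (γ * τ) • (1 : Matrix (Fin N) (Fin N) ℝ) + vecMulVec u u)
    (a b : ℝ) (ha : a = γ / L) (hb : b = ((1 + γ) / μ - 2 * γ / L) / (1 - γ)) :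
    (H - a • (1 : Matrix (Fin N) (Fin N) ℝ)).PosSemidef ∧
    (b • (1 : Matrix (Fin N) (Fin N) ℝ) - H).PosSemidef := by
  have hL : 0 < L := hμ.trans_le hμL
  have hmono := mul_dotProduct_self_le_dotProduct_gradient_sub hdiff hsc x' x
  have hcoco := (convexOn_of_convexOn_sub_half_mul_dotProduct_self hμ.le hsc
    ).dotProduct_gradient_sub_self_le hdiff hlip hL x' x
  rw [← hs, ← hy] at hmono hcoco
  have hsy : 0 < s ⬝ᵥ y :=
    (mul_pos hμ (dotProduct_self_pos (hs ▸ sub_ne_zero.2 hne))).trans_le hmono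
  have hyy : 0 < y ⬝ᵥ y := dotProduct_self_pos fun h => by simp [h] at hsy
  have hτy : τ * (y ⬝ᵥ y) = s ⬝ᵥ y := hτ ▸ div_mul_cancel₀ _ hyy.ne'
  have hτL : L⁻¹ ≤ τ := by
    rw [hτ, le_div_iff₀ hyy]
    exact (inv_mul_le_iff₀ hL).2 hcoco
  constructor
  · rw [show H - a • 1 = (γ * τ - a) • 1 + vecMulVec u u by rw [hH, sub_smul]; abel]
    refine posSemidef_smul_one_add_vecMulVec_self (sub_nonneg.2 ?_) u
    exact ha ▸ mul_le_mul_of_nonneg_left hτL hγ0.le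
  · rw [show b • 1 - H = (b - γ * τ) • 1 - vecMulVec u u by rw [hH, sub_smul]; abel]
    refine posSemidef_smul_one_sub_vecMulVec_self (le_sub_iff_add_le'.2 ?_)
    rw [hu, hb]
    exact mul_add_zeroSR1Vec_dotProduct_self_le hμ hμL hγ0 hγ1 hsy hmono hτy hτL
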